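/- For a planar 4-web with structure equations dω_i = ω_i∧θ, dθ = Kω₁∧ω₂, basic invariant a (a ≠ 0,1) with da = a₁ω₁ + a₂ω₂: the 1-form θ₁₂₄ := θ − (a₂/a)ω₂ satisfies dθ₁₂₄ = K₁₂₄ · a ω₁∧ω₂ where K₁₂₄ = (1/a)(K − a₁₂/a + a₁a₂/a²), given the second-order relations ∇a₁ = a₁₁ω₁ + a₁₂ω₂, ∇a₂ = a₁₂ω₁ + a₂₂ω₂ (∇a_i = da_i − a_iθ). -/

import Mathlib

/-!
Chart-level formalization of planar web geometry: the 2-manifold is (an open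
subset `U` of) `V = ℝ × ℝ`; 1-forms are smooth maps `V → (V →L[ℝ] ℝ)`;
`dOne` is the exterior derivative of a 1-form and `wedge` the wedge product
of two 1-forms, both evaluated at a point on a pair of tangent vectors.
-/

noncomputable section

abbrev V : Type := ℝ × ℝ

abbrev OneForm : Type := V → (V →L[ℝ] ℝ)

/-- Exterior derivative of a 1-form, evaluated at `x` on vectors `u, v`. -/
def dOne (ω : OneForm) : V → V → V → ℝ :=
  fun x u v => (fderiv ℝ ω x u) v - (fderiv ℝ ω x v) u

/-- Wedge product of two 1-forms, evaluated at `x` on vectors `u, v`. -/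
def wedge (ω η : OneForm) : V → V → V → ℝ :=
  fun x u v => ω x u * η x v - ω x v * η x u

/-!
With `g = a₂ / a`, the Leibniz rule gives `d(θ - g ω₂) = dθ - dg ∧ ω₂ - g dω₂`. Since
`a dg = da₂ - g da`, the prolonged structure equations write `dg` in terms of `ω₁, ω₂, θ`;
its `θ`-part `(a₂/a) θ` cancels against `g dω₂ = (a₂/a) ω₂ ∧ θ`, so only a multiple of
`ω₁ ∧ ω₂` survives.
-/

theorem mul_fderiv_div_apply {𝕜 E : Type*} [NontriviallyNormedField 𝕜] [NormedAddCommGroup E]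
    [NormedSpace 𝕜 E] {f g : E → 𝕜} {x : E} (hf : DifferentiableAt 𝕜 f x)
    (hg : DifferentiableAt 𝕜 g x) (hx : g x ≠ 0) (w : E) :
    g x * fderiv 𝕜 (fun y => f y / g y) x w = fderiv 𝕜 f x w - f x / g x * fderiv 𝕜 g x w := by
  have hinv : HasFDerivAt (fun y => (g y)⁻¹) (-(g x ^ 2)⁻¹ • fderiv 𝕜 g x) x :=
    (hasDerivAt_inv hx).comp_hasFDerivAt x hg.hasFDerivAt
  simp only [div_eq_mul_inv]
  rw [(hf.hasFDerivAt.fun_mul hinv).fderiv]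
  simp only [add_apply, smul_apply, smul_eq_mul]
  field_simp
  ring

theorem dOne_sub {ω η : OneForm} {x : V} (hω : DifferentiableAt ℝ ω x)
    (hη : DifferentiableAt ℝ η x) (u v : V) :
    dOne (fun y => ω y - η y) x u v = dOne ω x u v - dOne η x u v := by
  simp only [dOne, fderiv_fun_sub hω hη, sub_apply]
  ring

theorem dOne_smul {f : V → ℝ} {ω : OneForm} {x : V} (hf : DifferentiableAt ℝ f x)
    (hω : DifferentiableAt ℝ ω x) (u v : V) :
    dOne (fun y => f y • ω y) x u v = wedge (fderiv ℝ f) ω x u v + f x * dOne ω x u v := by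
  simp only [dOne, wedge, fderiv_fun_smul hf hω, add_apply,
    smul_apply, ContinuousLinearMap.smulRight_apply, smul_eq_mul]
  ring

theorem curvature_of_subweb_124_general
    (U : Set V) (hU : IsOpen U) (ω₁ ω₂ θ : OneForm)
    (K a a₁ a₂ a₁₂ a₂₂ : V → ℝ)
    (hω₂ : ContDiffOn ℝ (⊤ : ℕ∞) ω₂ U)
    (hθ : ContDiffOn ℝ (⊤ : ℕ∞) θ U)
    (ha : ContDiffOn ℝ (⊤ : ℕ∞) a U)
    (ha₂ : ContDiffOn ℝ (⊤ : ℕ∞) a₂ U)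
    (ha0 : ∀ x ∈ U, a x ≠ 0)
    (hs₂ : ∀ x ∈ U, ∀ u v : V, dOne ω₂ x u v = wedge ω₂ θ x u v)
    (hdθ : ∀ x ∈ U, ∀ u v : V, dOne θ x u v = K x * wedge ω₁ ω₂ x u v)
    (hda : ∀ x ∈ U, ∀ u : V,
      fderiv ℝ a x u = a₁ x * ω₁ x u + a₂ x * ω₂ x u)
    (hda₂ : ∀ x ∈ U, ∀ u : V,
      fderiv ℝ a₂ x u - a₂ x * θ x u = a₁₂ x * ω₁ x u + a₂₂ x * ω₂ x u) :
    ∀ x ∈ U, ∀ u v : V,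
      dOne (fun y => θ y - (a₂ y / a y) • ω₂ y) x u v
        = a x * ((1 / a x) * (K x - a₁₂ x / a x + a₁ x * a₂ x / (a x)^2))
            * wedge ω₁ ω₂ x u v := by
  intro x hx u v
  have hxU := hU.mem_nhds hx
  have dθ := (hθ.differentiableOn (by simp) x hx).differentiableAt hxU
  have dω₂ := (hω₂.differentiableOn (by simp) x hx).differentiableAt hxU
  have da := (ha.differentiableOn (by simp) x hx).differentiableAt hxU
  have da₂ := (ha₂.differentiableOn (by simp) x hx).differentiableAt hxU
  have hax := ha0 x hx
  have dg : DifferentiableAt ℝ (fun y => a₂ y / a y) x := by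
    simpa only [div_eq_mul_inv] using da₂.fun_mul (da.fun_inv hax)
  have hdg : ∀ w, fderiv ℝ (fun y => a₂ y / a y) x w
      = ((a₁₂ x - a₁ x * a₂ x / a x) * ω₁ x w + (a₂₂ x - a₂ x ^ 2 / a x) * ω₂ x w
          + a₂ x * θ x w) / a x := by
    intro w
    rw [eq_div_iff hax, mul_comm, mul_fderiv_div_apply da₂ da hax,
      sub_eq_iff_eq_add.mp (hda₂ x hx w), hda x hx w]
    ring
  rw [dOne_sub (η := fun y => (a₂ y / a y) • ω₂ y) dθ (dg.smul dω₂),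
    dOne_smul dg dω₂, hdθ x hx, hs₂ x hx]
  simp only [wedge, hdg]
  field_simp
  ring

/-- the connection form `θ₁₂₄ = θ − (a₂/a)ω₂` of the 3-subweb
[1,2,4] has curvature `K₁₂₄ = (1/a)(K − a₁₂/a + a₁a₂/a²)`:
`dθ₁₂₄ = a·K₁₂₄·ω₁∧ω₂`. -/
theorem curvature_of_subweb_124
    (U : Set V) (hU : IsOpen U) (ω₁ ω₂ θ : OneForm)
    (K a a₁ a₂ a₁₁ a₁₂ a₂₂ : V → ℝ)
    (hω₁ : ContDiffOn ℝ (⊤ : ℕ∞) ω₁ U) (hω₂ : ContDiffOn ℝ (⊤ : ℕ∞) ω₂ U)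
    (hθ : ContDiffOn ℝ (⊤ : ℕ∞) θ U) (hK : ContDiffOn ℝ (⊤ : ℕ∞) K U)
    (ha : ContDiffOn ℝ (⊤ : ℕ∞) a U)
    (ha₁ : ContDiffOn ℝ (⊤ : ℕ∞) a₁ U) (ha₂ : ContDiffOn ℝ (⊤ : ℕ∞) a₂ U)
    (hcof : ∀ x ∈ U, ∃ u v : V, wedge ω₁ ω₂ x u v ≠ 0)
    (ha0 : ∀ x ∈ U, a x ≠ 0) (ha1 : ∀ x ∈ U, a x ≠ 1)
    (hs₁ : ∀ x ∈ U, ∀ u v : V, dOne ω₁ x u v = wedge ω₁ θ x u v)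
    (hs₂ : ∀ x ∈ U, ∀ u v : V, dOne ω₂ x u v = wedge ω₂ θ x u v)
    (hdθ : ∀ x ∈ U, ∀ u v : V, dOne θ x u v = K x * wedge ω₁ ω₂ x u v)
    (hda : ∀ x ∈ U, ∀ u : V,
      fderiv ℝ a x u = a₁ x * ω₁ x u + a₂ x * ω₂ x u)
    (hda₁ : ∀ x ∈ U, ∀ u : V,
      fderiv ℝ a₁ x u - a₁ x * θ x u = a₁₁ x * ω₁ x u + a₁₂ x * ω₂ x u)
    (hda₂ : ∀ x ∈ U, ∀ u : V,
      fderiv ℝ a₂ x u - a₂ x * θ x u = a₁₂ x * ω₁ x u + a₂₂ x * ω₂ x u) :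
    ∀ x ∈ U, ∀ u v : V,
      dOne (fun y => θ y - (a₂ y / a y) • ω₂ y) x u v
        = a x * ((1 / a x) * (K x - a₁₂ x / a x + a₁ x * a₂ x / (a x)^2))
            * wedge ω₁ ω₂ x u v :=
  curvature_of_subweb_124_general U hU ω₁ ω₂ θ K a a₁ a₂ a₁₂ a₂₂ hω₂ hθ ha ha₂ ha0 hs₂ hdθ hda hda₂
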